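/- Let G = (V,E) be a finite connected simple graph. The number of strongly connected orientations of G equals Σ_{S ⊆ E} (−1)^{c(S) − 1}, where c(S) is the number of connected components of the spanning subgraph (V,S). (This sum is the Tutte polynomial evaluation T_G(0,2) via the subgraph expansion.) -/

import Mathlib

/-- An orientation of a simple graph: a choice of direction for each edge. -/
structure GraphOrientation {V : Type*} (G : SimpleGraph V) where
  dir : V → V → Prop
  adj_of_dir : ∀ u v, dir u v → G.Adj u v
  dir_iff_not : ∀ u v, G.Adj u v → (dir u v ↔ ¬ dir v u)

namespace GraphOrientation

variable {V : Type*} {G : SimpleGraph V}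

/-- The outdegree of a vertex: the number of edges directed away from it. -/
noncomputable def outDegree (O : GraphOrientation G) (v : V) : ℕ :=
  {u | O.dir v u}.ncard

/-- `v` is reachable from `u` by a directed path. -/
def Reaches (O : GraphOrientation G) : V → V → Prop :=
  Relation.ReflTransGen O.dir

/-- `C` is the edge set of a directed cycle of the orientation. -/
def IsDirCycle (O : GraphOrientation G) (C : Set (Sym2 V)) : Prop :=
  ∃ (v : V) (w : G.Walk v v), w.IsCycle ∧
    (∀ d ∈ w.darts, O.dir d.toProd.1 d.toProd.2) ∧ C = {e | e ∈ w.edges}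

/-- The orientation is strongly connected. -/
def IsStronglyConnected (O : GraphOrientation G) : Prop := ∀ u v, O.Reaches u v

/-- Every vertex is reachable from `v0`. -/
def IsConnectedFrom (O : GraphOrientation G) (v0 : V) : Prop := ∀ v, O.Reaches v0 v

/-- The set of edges on which two orientations differ. -/
def diffSet (O O' : GraphOrientation G) : Set (Sym2 V) :=
  {e | ∃ a b, e = s(a, b) ∧ O.dir a b ∧ O'.dir b a}

/-- `O'` is obtained from `O` by reversing exactly the edges of `A`. -/
def IsFlipOn (O O' : GraphOrientation G) (A : Set (Sym2 V)) : Prop :=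
  (∀ u v, s(u, v) ∈ A → (O'.dir u v ↔ O.dir v u)) ∧
    (∀ u v, s(u, v) ∉ A → (O'.dir u v ↔ O.dir u v))

/-- One cycle-flip step. -/
def CycleFlip (O O' : GraphOrientation G) : Prop :=
  ∃ C, O.IsDirCycle C ∧ O.IsFlipOn O' C

end GraphOrientation

/-- The cut defined by a vertex subset `U`: edges with exactly one endpoint in `U`. -/
def SimpleGraph.cutSet {V : Type*} (G : SimpleGraph V) (U : Set V) : Set (Sym2 V) :=
  {e | ∃ a b, e = s(a, b) ∧ G.Adj a b ∧ a ∈ U ∧ b ∉ U}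

/-- A cocycle: a minimal nonempty cut. -/
def SimpleGraph.IsCocycle {V : Type*} (G : SimpleGraph V) (D : Set (Sym2 V)) : Prop :=
  D.Nonempty ∧ (∃ U : Set V, D = G.cutSet U) ∧
    ∀ D' : Set (Sym2 V), D'.Nonempty → (∃ U : Set V, D' = G.cutSet U) → D' ⊆ D → D' = D

/-- A directed cocycle: a cocycle all of whose edges are directed toward the same side. -/
def GraphOrientation.IsDirCocycle {V : Type*} {G : SimpleGraph V}
    (O : GraphOrientation G) (D : Set (Sym2 V)) : Prop :=
  G.IsCocycle D ∧ ∃ U : Set V, D = G.cutSet U ∧ ∀ a b, O.dir a b → s(a, b) ∈ D → b ∈ U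

/-- The excess of a subset of vertices with respect to `δ : V → ℕ`. -/
noncomputable def SimpleGraph.excess {V : Type*} (G : SimpleGraph V) (δ : V → ℕ)
    (U : Finset V) : ℤ :=
  (∑ u ∈ U, (δ u : ℤ)) - ({e | e ∈ G.edgeSet ∧ ∀ x ∈ e, x ∈ U} : Set (Sym2 V)).ncard

/-- `C` is the edge set of a cycle of `G`. -/
def SimpleGraph.IsCycleEdgeSet {V : Type*} (G : SimpleGraph V) (C : Set (Sym2 V)) : Prop :=
  ∃ (v : V) (w : G.Walk v v), w.IsCycle ∧ C = {e | e ∈ w.edges}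

/-- The number of connected components of the spanning subgraph `(V, S)`. -/
noncomputable def numComponents (V : Type*) (S : Set (Sym2 V)) : ℕ :=
  Nat.card (SimpleGraph.fromEdgeSet S).ConnectedComponent

/-!
An orientation is strongly connected iff no nonempty proper vertex set `U` is closed (no arc
leaves `U`). Inclusion–exclusion over families `F` of such sets, summed over all orientations,
gives `∑_F (-1)^|F| · #{O | every member of F is closed in O}`. This count vanishes unless `F` is
coherent (no edge is forced in both directions), and then equals the number of edge sets `S`
crossing no member of `F`: reverse a fixed admissible orientation exactly on `S`. Exchanging the
sums, the number of strongly connected orientations is `∑_S ∑_F (-1)^|F|`, the inner sum running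
over coherent families of unions of components of `(V, S)`.

The inner sum is evaluated for an arbitrary relation `r` on `V` (a partial orientation) by
induction on the edges not yet carrying an arc of `r`: the sums for `r`, `r + xy`, `r + yx` and
`r + xy + yx` satisfy an inclusion–exclusion identity, and so does the closed form `-(-1)^k` for a
totally cyclic `r` with `k` strong components (`0` otherwise). Once every edge carries an arc,
every family of closed sets is coherent and the sum is `1` or `0` according as `r` is strongly
connected or not. For `r` the symmetric relation of `S`, the strong components are the
components of `(V, S)`.
-/

open Finset Relation

theorem Nat.card_quot_add_one_of_merge {α : Type*} [Finite α] {s s' : α → α → Prop}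
    (hs : Equivalence s) {x y : α} (hxy : ¬ s x y)
    (hs' : ∀ u v, s' u v ↔ s u v ∨ (s u x ∨ s u y) ∧ (s v x ∨ s v y)) :
    Nat.card (Quot s') + 1 = Nat.card (Quot s) := by
  classical
  have mk_eq {u v : α} : Quot.mk s u = Quot.mk s v ↔ s u v := Quot.eq.trans hs.eqvGen_iff
  -- the class of `y` goes to the class of `x`, every other class to itself
  let key (w : α) : {c : Quot s // c ≠ Quot.mk s y} :=
    if hw : s w y then ⟨Quot.mk s x, mt mk_eq.1 hxy⟩ else ⟨Quot.mk s w, mt mk_eq.1 hw⟩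
  have key_of_not {w : α} (hw : ¬ s w y) : key w = ⟨Quot.mk s w, mt mk_eq.1 hw⟩ := dif_neg hw
  have key_eq_x {w : α} (hw : s w x ∨ s w y) : key w = ⟨Quot.mk s x, mt mk_eq.1 hxy⟩ := by
    by_cases hwy : s w y
    · exact dif_pos hwy
    · exact (key_of_not hwy).trans (Subtype.ext (mk_eq.2 (hw.resolve_right hwy)))
  have key_resp (u v : α) (h : s' u v) : key u = key v := by
    rcases (hs' u v).1 h with h | ⟨hu, hv⟩
    · by_cases huy : s u y
      · rw [key_eq_x (.inr huy), key_eq_x (.inr (hs.trans (hs.symm h) huy))]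
      · rw [key_of_not huy, key_of_not fun hvy => huy (hs.trans h hvy)]
        exact Subtype.ext (mk_eq.2 h)
    · rw [key_eq_x hu, key_eq_x hv]
  let e : {c : Quot s // c ≠ Quot.mk s y} ≃ Quot s' :=
  { toFun := fun c => Quot.map id (fun u v h => (hs' u v).2 (.inl h)) c.1
    invFun := Quot.lift key key_resp
    left_inv := by
      rintro ⟨c, hc⟩
      induction c using Quot.ind with | _ u => exact key_of_not (mt mk_eq.2 hc)
    right_inv := by
      intro c
      induction c using Quot.ind with | _ w => ?_
      by_cases hwy : s w y
      · simp only [key, dif_pos hwy]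
        exact Quot.sound ((hs' x w).2 (.inr ⟨.inl (hs.refl x), .inr hwy⟩))
      · simp only [key_of_not hwy]
        rfl }
  rw [← Nat.card_congr e, ← Finite.card_option, Nat.card_congr (Equiv.optionSubtypeNe _)]

namespace Relation

variable {α : Type*} {r : α → α → Prop} {x y u v : α}

def addArc (r : α → α → Prop) (x y : α) : α → α → Prop := fun a b => r a b ∨ a = x ∧ b = y

theorem le_addArc (r : α → α → Prop) (x y : α) : r ≤ addArc r x y := fun _ _ => .inl

theorem addArc_comm (r : α → α → Prop) (x y x' y' : α) :
    addArc (addArc r x y) x' y' = addArc (addArc r x' y') x y := by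
  funext a b
  simp only [addArc, eq_iff_iff]
  tauto

theorem reflTransGen_addArc_iff :
    ReflTransGen (addArc r x y) u v ↔
      ReflTransGen r u v ∨ ReflTransGen r u x ∧ ReflTransGen r y v := by
  have lift {a b : α} : ReflTransGen r a b → ReflTransGen (addArc r x y) a b :=
    ReflTransGen.mono (le_addArc r x y) _ _
  refine ⟨fun h => ?_, ?_⟩
  · induction h with
    | refl => exact .inl .refl
    | tail _ hbc ih =>
      rcases hbc with hbc | ⟨rfl, rfl⟩
      · exact ih.imp (·.tail hbc) fun ⟨hux, hyb⟩ => ⟨hux, hyb.tail hbc⟩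
      · exact .inr ⟨ih.elim id (·.1), .refl⟩
  · rintro (h | ⟨hux, hyv⟩)
    · exact lift h
    · exact (lift hux).trans (.head (.inr ⟨rfl, rfl⟩) (lift hyv))

theorem reflTransGen_addArc_of_reflTransGen (hxy : ReflTransGen r x y) :
    ReflTransGen (addArc r x y) = ReflTransGen r := by
  funext u v
  refine propext (reflTransGen_addArc_iff.trans ⟨?_, .inl⟩)
  rintro (h | ⟨hux, hyv⟩)
  exacts [h, (hux.trans hxy).trans hyv]

theorem reflTransGen_addArc_addArc_iff :
    ReflTransGen (addArc (addArc r y x) x y) u v ↔ ReflTransGen r u v ∨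
      (ReflTransGen r u x ∨ ReflTransGen r u y) ∧ (ReflTransGen r x v ∨ ReflTransGen r y v) := by
  simp only [reflTransGen_addArc_iff]
  constructor
  · rintro ((h | ⟨h1, h2⟩) | ⟨h1 | ⟨h1, h2⟩, h3 | ⟨h3, h4⟩⟩) <;> tauto
  · rintro (h | ⟨h1 | h1, h2 | h2⟩)
    · tauto
    · exact .inr ⟨.inl h1, .inr ⟨.refl, h2⟩⟩
    · tauto
    · tauto
    · exact .inr ⟨.inr ⟨h1, .refl⟩, .inl h2⟩

def IsTotallyCyclic (r : α → α → Prop) : Prop := ∀ a b, r a b → ReflTransGen r b a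

theorem IsTotallyCyclic.reflTransGen_symm (hr : IsTotallyCyclic r) (h : ReflTransGen r u v) :
    ReflTransGen r v u := by
  induction h with
  | refl => exact .refl
  | tail _ hbc ih => exact (hr _ _ hbc).trans ih

theorem isTotallyCyclic_iff_symm :
    IsTotallyCyclic r ↔ ∀ a b, ReflTransGen r a b → ReflTransGen r b a :=
  ⟨fun h _ _ => h.reflTransGen_symm, fun h a b hab => h a b (.single hab)⟩

theorem IsTotallyCyclic.equivalence (hr : IsTotallyCyclic r) : Equivalence (ReflTransGen r) :=
  ⟨fun _ => .refl, hr.reflTransGen_symm, .trans⟩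

theorem isTotallyCyclic_addArc_of_reflTransGen (hxy : ReflTransGen r x y) :
    IsTotallyCyclic (addArc r x y) ↔ IsTotallyCyclic r ∧ ReflTransGen r y x := by
  simp only [IsTotallyCyclic, reflTransGen_addArc_of_reflTransGen hxy, addArc]
  constructor
  · exact fun h => ⟨fun a b hab => h a b (.inl hab), h x y (.inr ⟨rfl, rfl⟩)⟩
  · rintro ⟨h, hyx⟩ a b (hab | ⟨rfl, rfl⟩)
    exacts [h a b hab, hyx]

theorem not_isTotallyCyclic_addArc (hyx : ¬ ReflTransGen r y x) :
    ¬ IsTotallyCyclic (addArc r x y) := fun h =>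
  hyx <| (reflTransGen_addArc_iff.1 (h x y (.inr ⟨rfl, rfl⟩))).elim id (·.1)

def MutuallyReachable (r : α → α → Prop) (a b : α) : Prop :=
  ReflTransGen r a b ∧ ReflTransGen r b a

noncomputable def numStrongComponents (r : α → α → Prop) : ℕ :=
  Nat.card (Quot (MutuallyReachable r))

theorem IsTotallyCyclic.mutuallyReachable_eq (hr : IsTotallyCyclic r) :
    MutuallyReachable r = ReflTransGen r := by
  funext u v
  exact propext ⟨And.left, fun h => ⟨h, hr.reflTransGen_symm h⟩⟩

theorem numStrongComponents_of_forall_reflTransGen [Nonempty α]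
    (h : ∀ u v, ReflTransGen r u v) : numStrongComponents r = 1 := by
  have : Subsingleton (Quot (MutuallyReachable r)) :=
    ⟨fun c d => Quot.induction_on₂ c d fun u v => Quot.sound ⟨h u v, h v u⟩⟩
  have : Nonempty (Quot (MutuallyReachable r)) := .map (Quot.mk _) ‹_›
  exact Nat.card_unique

/-- The sign `(-1)^(k-1)` of a totally cyclic relation with `k` strong components, written as
`-(-1)^k` to avoid truncated subtraction. -/
noncomputable def cyclicSign (r : α → α → Prop) : ℤ :=
  open Classical in if IsTotallyCyclic r then -(-1) ^ numStrongComponents r else 0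

theorem cyclicSign_of_not_isTotallyCyclic (hr : ¬ IsTotallyCyclic r) : cyclicSign r = 0 :=
  if_neg hr

theorem cyclicSign_eq_zero_of_reflTransGen (hxy : ReflTransGen r x y)
    (hyx : ¬ ReflTransGen r y x) : cyclicSign r = 0 :=
  cyclicSign_of_not_isTotallyCyclic fun hr => hyx (hr.reflTransGen_symm hxy)

theorem cyclicSign_addArc_of_not_reflTransGen (hyx : ¬ ReflTransGen r y x) :
    cyclicSign (addArc r x y) = 0 :=
  cyclicSign_of_not_isTotallyCyclic (not_isTotallyCyclic_addArc hyx)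

theorem cyclicSign_addArc_of_reflTransGen (hxy : ReflTransGen r x y)
    (hyx : ReflTransGen r y x) : cyclicSign (addArc r x y) = cyclicSign r := by
  classical
  have hmut : MutuallyReachable (addArc r x y) = MutuallyReachable r := by
    unfold MutuallyReachable
    rw [reflTransGen_addArc_of_reflTransGen hxy]
  simp only [cyclicSign, numStrongComponents, hmut, isTotallyCyclic_addArc_of_reflTransGen hxy,
    hyx, and_true]

theorem IsTotallyCyclic.numStrongComponents_addArc_addArc [Finite α] (hr : IsTotallyCyclic r)
    (hxy : ¬ ReflTransGen r x y) :
    IsTotallyCyclic (addArc (addArc r y x) x y) ∧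
      numStrongComponents (addArc (addArc r y x) x y) + 1 = numStrongComponents r := by
  have hsymm {a b : α} : ReflTransGen r a b ↔ ReflTransGen r b a :=
    ⟨hr.reflTransGen_symm, hr.reflTransGen_symm⟩
  have hreach (u v : α) : ReflTransGen (addArc (addArc r y x) x y) u v ↔ ReflTransGen r u v ∨
      (ReflTransGen r u x ∨ ReflTransGen r u y) ∧ (ReflTransGen r v x ∨ ReflTransGen r v y) := by
    rw [reflTransGen_addArc_addArc_iff, @hsymm x v, @hsymm y v]
  have hr' : IsTotallyCyclic (addArc (addArc r y x) x y) := by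
    rw [isTotallyCyclic_iff_symm]
    intro a b
    rw [hreach, hreach, @hsymm a b]
    tauto
  refine ⟨hr', ?_⟩
  rw [numStrongComponents, numStrongComponents, hr.mutuallyReachable_eq,
    hr'.mutuallyReachable_eq]
  exact Nat.card_quot_add_one_of_merge hr.equivalence hxy hreach

theorem cyclicSign_addArc_addArc_of_not_reflTransGen [Finite α] (hxy : ¬ ReflTransGen r x y)
    (hyx : ¬ ReflTransGen r y x) :
    cyclicSign (addArc (addArc r y x) x y) = -cyclicSign r := by
  by_cases hr : IsTotallyCyclic r
  · obtain ⟨hr', hcard⟩ := hr.numStrongComponents_addArc_addArc hxy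
    rw [cyclicSign, if_pos hr', cyclicSign, if_pos hr, ← hcard, pow_succ]
    ring
  · obtain ⟨a, b, hab, hba⟩ : ∃ a b, r a b ∧ ¬ ReflTransGen r b a := by
      simpa [IsTotallyCyclic] using hr
    rw [cyclicSign_of_not_isTotallyCyclic hr, neg_zero]
    refine cyclicSign_eq_zero_of_reflTransGen (x := a) (y := b) (.single (.inl (.inl hab))) ?_
    rw [reflTransGen_addArc_addArc_iff]
    have hab : ReflTransGen r a b := .single hab
    rintro (h | ⟨hbx | hby, hxa | hya⟩)
    exacts [hba h, hba (hbx.trans hxa), hyx ((hya.trans hab).trans hbx),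
      hxy ((hxa.trans hab).trans hby), hba (hby.trans hya)]

theorem cyclicSign_rec_of_reflTransGen_of_not (hxy : ReflTransGen r x y)
    (hyx : ¬ ReflTransGen r y x) :
    cyclicSign r = cyclicSign (addArc r x y) + cyclicSign (addArc r y x) -
      cyclicSign (addArc (addArc r y x) x y) := by
  rw [cyclicSign_eq_zero_of_reflTransGen hxy hyx, cyclicSign_addArc_of_not_reflTransGen hyx,
    cyclicSign_addArc_of_reflTransGen (ReflTransGen.mono (le_addArc r y x) _ _ hxy)
      (.single (.inr ⟨rfl, rfl⟩))]
  ring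

theorem cyclicSign_rec [Finite α] (r : α → α → Prop) (x y : α) :
    cyclicSign r = cyclicSign (addArc r x y) + cyclicSign (addArc r y x) -
      cyclicSign (addArc (addArc r y x) x y) := by
  by_cases hxy : ReflTransGen r x y <;> by_cases hyx : ReflTransGen r y x
  · have lift {a b : α} : ReflTransGen r a b → ReflTransGen (addArc r y x) a b :=
      ReflTransGen.mono (le_addArc r y x) _ _
    rw [cyclicSign_addArc_of_reflTransGen (lift hxy) (lift hyx),
      cyclicSign_addArc_of_reflTransGen hxy hyx, cyclicSign_addArc_of_reflTransGen hyx hxy]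
    ring
  · exact cyclicSign_rec_of_reflTransGen_of_not hxy hyx
  · rw [cyclicSign_rec_of_reflTransGen_of_not hyx hxy, addArc_comm]
    ring
  · rw [cyclicSign_addArc_of_not_reflTransGen hyx, cyclicSign_addArc_of_not_reflTransGen hxy,
      cyclicSign_addArc_addArc_of_not_reflTransGen hxy hyx]
    ring

end Relation

section ClosedSets

variable {V : Type*} {r : V → V → Prop} {x y : V} {G : SimpleGraph V}

def IsClosedUnder (r : V → V → Prop) (U : Finset V) : Prop := ∀ a b, r a b → a ∈ U → b ∈ U

theorem IsClosedUnder.mem_of_reflTransGen {U : Finset V} (hU : IsClosedUnder r U) {a b : V}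
    (hab : ReflTransGen r a b) (ha : a ∈ U) : b ∈ U := by
  induction hab with
  | refl => exact ha
  | tail _ hbc ih => exact hU _ _ hbc ih

theorem isClosedUnder_addArc {U : Finset V} :
    IsClosedUnder (addArc r x y) U ↔ IsClosedUnder r U ∧ (x ∈ U → y ∈ U) := by
  simp only [IsClosedUnder, addArc]
  constructor
  · exact fun h => ⟨fun a b hab => h a b (.inl hab), h x y (.inr ⟨rfl, rfl⟩)⟩
  · rintro ⟨h, hxy⟩ a b (hab | ⟨rfl, rfl⟩)
    exacts [h a b hab, hxy]

/-- Two members of `F` never force opposite directions on an edge; equivalently (see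
`SimpleGraph.IsCoherent.exists_orientation`) some orientation has no arc leaving a member of `F`. -/
def SimpleGraph.IsCoherent (G : SimpleGraph V) (F : Finset (Finset V)) : Prop :=
  ∀ X ∈ F, ∀ Y ∈ F, ∀ a b, G.Adj a b → a ∈ X → b ∈ Y → a ∈ Y ∨ b ∈ X

theorem reflTransGen_of_covered (hG : G.Connected) (hcov : ∀ a b, G.Adj a b → r a b ∨ r b a)
    (hr : IsTotallyCyclic r) (u v : V) : ReflTransGen r u v := by
  have huv := (SimpleGraph.reachable_iff_reflTransGen u v).1 (hG.preconnected u v)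
  induction huv with
  | refl => exact .refl
  | tail _ hbc ih => exact ih.trans ((hcov _ _ hbc).elim .single (hr _ _))

variable [Fintype V] [DecidableEq V]

variable (V) in
def properSubsets : Finset (Finset V) := {U | U.Nonempty ∧ U ≠ univ}

theorem forall_reflTransGen_iff :
    (∀ u v, ReflTransGen r u v) ↔ ∀ U ∈ properSubsets V, ¬ IsClosedUnder r U := by
  simp only [properSubsets, mem_filter, mem_univ, true_and]
  constructor
  · rintro h U ⟨⟨u, hu⟩, hU⟩ hcl
    exact hU (eq_univ_iff_forall.2 fun v => hcl.mem_of_reflTransGen (h u v) hu)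
  · intro h u v
    by_contra huv
    classical
    refine h {w | ReflTransGen r u w} ⟨⟨u, by simp [ReflTransGen.refl]⟩, fun hU => huv ?_⟩
      fun a b hab ha => ?_
    · simpa using eq_univ_iff_forall.1 hU v
    · simp only [mem_filter, mem_univ, true_and] at ha ⊢
      exact ha.tail hab

open Classical in
theorem sum_powerset_properSubsets_isClosedUnder (r : V → V → Prop) :
    ∑ F ∈ (properSubsets V).powerset,
        (if ∀ U ∈ F, IsClosedUnder r U then (-1 : ℤ) ^ #F else 0) =
      if ∀ u v, ReflTransGen r u v then 1 else 0 := by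
  have hfilter : {F ∈ (properSubsets V).powerset | ∀ U ∈ F, IsClosedUnder r U} =
      ((properSubsets V).filter (IsClosedUnder r)).powerset := by
    ext F
    simp only [mem_filter, mem_powerset, subset_iff]
    grind
  rw [← sum_filter, hfilter, sum_powerset_neg_one_pow_card]
  simp only [filter_eq_empty_iff, ← forall_reflTransGen_iff]

noncomputable def coherentFamilySum (G : SimpleGraph V) (r : V → V → Prop) : ℤ :=
  open Classical in ∑ F ∈ (properSubsets V).powerset,
    if G.IsCoherent F ∧ ∀ U ∈ F, IsClosedUnder r U then (-1) ^ #F else 0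

theorem coherentFamilySum_rec (hxy : G.Adj x y) (r : V → V → Prop) :
    coherentFamilySum G r = coherentFamilySum G (addArc r x y) +
      coherentFamilySum G (addArc r y x) - coherentFamilySum G (addArc (addArc r y x) x y) := by
  classical
  simp only [coherentFamilySum, ← sum_add_distrib, ← sum_sub_distrib]
  refine sum_congr rfl fun F _ => ?_
  simp only [isClosedUnder_addArc]
  -- a coherent family cannot separate `x` from `y` and also `y` from `x`
  have hsep : G.IsCoherent F → (∀ U ∈ F, x ∈ U → y ∈ U) ∨ ∀ U ∈ F, y ∈ U → x ∈ U := by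
    intro hF
    by_contra! ⟨⟨X, hX, hxX, hyX⟩, ⟨Y, hY, hyY, hxY⟩⟩
    exact (hF X hX Y hY x y hxy hxX hyY).elim hxY hyX
  split_ifs <;> grind

theorem coherentFamilySum_of_covered (hG : G.Connected)
    (hcov : ∀ a b, G.Adj a b → r a b ∨ r b a) : coherentFamilySum G r = cyclicSign r := by
  classical
  have hcoh (F : Finset (Finset V)) (hF : ∀ U ∈ F, IsClosedUnder r U) : G.IsCoherent F := by
    intro X hX Y hY a b hab ha hb
    rcases hcov a b hab with h | h
    exacts [.inr (hF X hX a b h ha), .inl (hF Y hY b a h hb)]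
  have : Nonempty V := hG.nonempty
  rw [coherentFamilySum]
  simp only [and_iff_right_of_imp (hcoh _)]
  rw [sum_powerset_properSubsets_isClosedUnder]
  by_cases hall : ∀ u v, ReflTransGen r u v
  · rw [if_pos hall, cyclicSign, if_pos (show IsTotallyCyclic r from fun a b _ => hall b a),
      numStrongComponents_of_forall_reflTransGen hall]
    norm_num
  · rw [if_neg hall, cyclicSign_of_not_isTotallyCyclic fun hr =>
      hall (reflTransGen_of_covered hG hcov hr)]

theorem coherentFamilySum_eq_cyclicSign (hG : G.Connected) (r : V → V → Prop) :
    coherentFamilySum G r = cyclicSign r := by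
  suffices ∀ T : Finset (Sym2 V), ∀ r : V → V → Prop,
      (∀ a b, G.Adj a b → r a b ∨ r b a ∨ s(a, b) ∈ T) →
        coherentFamilySum G r = cyclicSign r from
    this univ r fun a b _ => .inr (.inr (mem_univ _))
  intro T
  induction T using Finset.induction_on with
  | empty =>
    exact fun r hr => coherentFamilySum_of_covered hG fun a b hab =>
      (hr a b hab).imp_right (·.resolve_right (notMem_empty _))
  | insert e T _ ih =>
    intro r hr
    induction e using Sym2.ind with | _ x y => ?_
    have hcov (r' : V → V → Prop) (hle : r ≤ r') (hxy : r' x y ∨ r' y x) (a b : V)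
        (hab : G.Adj a b) : r' a b ∨ r' b a ∨ s(a, b) ∈ T := by
      rcases hr a b hab with h | h | h
      · exact .inl (hle _ _ h)
      · exact .inr (.inl (hle _ _ h))
      rcases mem_insert.1 h with h | h
      · rcases Sym2.eq_iff.1 h with ⟨rfl, rfl⟩ | ⟨rfl, rfl⟩ <;> tauto
      · exact .inr (.inr h)
    by_cases hxy : G.Adj x y
    · rw [coherentFamilySum_rec hxy, cyclicSign_rec r x y,
        ih _ (hcov _ (le_addArc r x y) (.inl (.inr ⟨rfl, rfl⟩))),
        ih _ (hcov _ (le_addArc r y x) (.inr (.inr ⟨rfl, rfl⟩))),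
        ih _ (hcov _ ((le_addArc r y x).trans (le_addArc _ x y)) (.inl (.inr ⟨rfl, rfl⟩)))]
    · refine ih r fun a b hab => (hr a b hab).imp_right (·.imp_right fun h => ?_)
      refine (mem_insert.1 h).resolve_left fun h' => hxy ?_
      exact G.mem_edgeSet.1 (h' ▸ G.mem_edgeSet.2 hab)

end ClosedSets

namespace GraphOrientation

variable {V : Type*} {G : SimpleGraph V}

theorem ext {O O' : GraphOrientation G} (h : O.dir = O'.dir) : O = O' := by
  cases O; cases O'; cases h; rfl

instance [Finite V] : Finite (GraphOrientation G) :=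
  .of_injective dir fun _ _ => ext

noncomputable instance [Finite V] : Fintype (GraphOrientation G) := .ofFinite _

theorem dir_or_dir (O : GraphOrientation G) {a b : V} (hab : G.Adj a b) :
    O.dir a b ∨ O.dir b a :=
  (em (O.dir b a)).elim .inr fun h => .inl ((O.dir_iff_not a b hab).2 h)

theorem not_dir_of_dir (O : GraphOrientation G) {a b : V} (h : O.dir a b) : ¬ O.dir b a :=
  (O.dir_iff_not a b (O.adj_of_dir a b h)).1 h

theorem exists_dir_of (f : V → V → Prop) (hf : ∀ a b, G.Adj a b → f a b → ¬ f b a) :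
    ∃ O : GraphOrientation G, ∀ a b, G.Adj a b → f a b → O.dir a b := by
  refine ⟨⟨fun a b => G.Adj a b ∧ (f a b ∨ ¬ f b a ∧ WellOrderingRel a b), fun a b h => h.1,
    fun a b hab => ?_⟩, fun a b hab h => ⟨hab, .inl h⟩⟩
  have := hf a b hab
  have := hf b a hab.symm
  have := trichotomous_of WellOrderingRel a b
  have := asymm_of WellOrderingRel (a := a) (b := b)
  have := hab.ne
  simp only [hab.symm, true_and]
  tauto

noncomputable def flip (O : GraphOrientation G) (S : Set (Sym2 V)) : GraphOrientation G where
  dir a b := open Classical in if s(a, b) ∈ S then O.dir b a else O.dir a b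
  adj_of_dir a b h := by
    split_ifs at h
    exacts [(O.adj_of_dir b a h).symm, O.adj_of_dir a b h]
  dir_iff_not a b hab := by
    rw [Sym2.eq_swap]
    split_ifs
    exacts [O.dir_iff_not b a hab.symm, O.dir_iff_not a b hab]

variable {O : GraphOrientation G} {a b : V} {S : Set (Sym2 V)}

theorem flip_dir_of_mem (h : s(a, b) ∈ S) : (O.flip S).dir a b ↔ O.dir b a := by
  simp only [flip, if_pos h]

theorem flip_dir_of_not_mem (h : s(a, b) ∉ S) : (O.flip S).dir a b ↔ O.dir a b := by
  simp only [flip, if_neg h]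

theorem mem_diffSet {O' : GraphOrientation G} :
    s(a, b) ∈ O.diffSet O' ↔ O.dir a b ∧ O'.dir b a ∨ O.dir b a ∧ O'.dir a b := by
  simp only [diffSet, Set.mem_ofPred_eq, Sym2.eq_iff]
  constructor
  · rintro ⟨c, d, ⟨rfl, rfl⟩ | ⟨rfl, rfl⟩, h⟩ <;> tauto
  · rintro (h | h)
    exacts [⟨a, b, .inl ⟨rfl, rfl⟩, h⟩, ⟨b, a, .inr ⟨rfl, rfl⟩, h⟩]

theorem diffSet_subset_edgeSet (O O' : GraphOrientation G) : O.diffSet O' ⊆ G.edgeSet := by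
  rintro _ ⟨a, b, rfl, h, -⟩
  exact O.adj_of_dir a b h

theorem flip_diffSet (O O₀ : GraphOrientation G) : O₀.flip (O.diffSet O₀) = O := by
  refine ext (funext₂ fun a b => propext ?_)
  by_cases hab : G.Adj a b
  · by_cases h : s(a, b) ∈ O.diffSet O₀
    · rw [flip_dir_of_mem h]
      rcases mem_diffSet.1 h with ⟨h1, h0⟩ | ⟨h1, h0⟩
      exacts [iff_of_true h0 h1, iff_of_false (O₀.not_dir_of_dir h0) (O.not_dir_of_dir h1)]
    · rw [flip_dir_of_not_mem h]
      rw [mem_diffSet, not_or, not_and, not_and] at h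
      rcases O.dir_or_dir hab with h1 | h1
      · exact iff_of_true ((O₀.dir_or_dir hab).resolve_right (h.1 h1)) h1
      · exact iff_of_false (h.2 h1) (O.not_dir_of_dir h1)
  · exact iff_of_false (mt ((O₀.flip _).adj_of_dir a b) hab) (mt (O.adj_of_dir a b) hab)

theorem diffSet_flip (O₀ : GraphOrientation G) (hS : S ⊆ G.edgeSet) :
    (O₀.flip S).diffSet O₀ = S := by
  ext e
  induction e using Sym2.ind with | _ a b => ?_
  rw [mem_diffSet]
  by_cases h : s(a, b) ∈ S
  · have h' : s(b, a) ∈ S := Sym2.eq_swap (a := a) ▸ h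
    rw [flip_dir_of_mem h, flip_dir_of_mem h']
    have := O₀.dir_or_dir (hS h)
    tauto
  · have h' : s(b, a) ∉ S := Sym2.eq_swap (a := a) ▸ h
    rw [flip_dir_of_not_mem h, flip_dir_of_not_mem h']
    have := O₀.not_dir_of_dir (a := a) (b := b)
    tauto

theorem card_filter_eq_card_filter_flip [Fintype V] [DecidableEq V] [DecidableRel G.Adj]
    (O₀ : GraphOrientation G) (p : GraphOrientation G → Prop) [DecidablePred p] :
    #{O | p O} =
      #(G.edgeFinset.powerset.filter fun T : Finset (Sym2 V) => p (O₀.flip T)) := by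
  classical
  have hcoe (O : GraphOrientation G) :
      (G.edgeFinset.filter (· ∈ O.diffSet O₀) : Set (Sym2 V)) = O.diffSet O₀ := by
    ext e
    simpa using fun h => diffSet_subset_edgeSet O O₀ h
  refine (card_bij' (fun (T : Finset (Sym2 V)) _ => O₀.flip ↑T)
    (fun O _ => G.edgeFinset.filter (· ∈ O.diffSet O₀))
    (fun T hT => ?_) (fun O hO => ?_) (fun T hT => ?_) (fun O _ => ?_)).symm
  · simpa using (mem_filter.1 hT).2
  · simpa [hcoe, flip_diffSet] using hO
  · ext e
    have hT : (T : Set (Sym2 V)) ⊆ G.edgeSet := by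
      simpa [← coe_subset] using (mem_filter.1 hT).1
    simpa [diffSet_flip O₀ hT] using @hT e
  · simp only [hcoe, flip_diffSet]

variable {U : Finset V} {F : Finset (Finset V)}

theorem isClosedUnder_flip_iff (hO : IsClosedUnder O.dir U) (hS : S ⊆ G.edgeSet) :
    IsClosedUnder (O.flip S).dir U ↔ IsClosedUnder (Sym2.ToRel S) U := by
  constructor
  · intro h a b hab ha
    rcases O.dir_or_dir (hS hab) with hd | hd
    exacts [hO a b hd ha, h a b ((flip_dir_of_mem hab).2 hd) ha]
  · intro h a b hab ha
    by_cases hS' : s(a, b) ∈ S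
    exacts [h a b hS' ha, hO a b ((flip_dir_of_not_mem hS').1 hab) ha]

theorem isCoherent (O : GraphOrientation G) (hF : ∀ U ∈ F, IsClosedUnder O.dir U) :
    G.IsCoherent F := by
  intro X hX Y hY a b hab ha hb
  rcases O.dir_or_dir hab with h | h
  exacts [.inr (hF X hX a b h ha), .inl (hF Y hY b a h hb)]

end GraphOrientation

open GraphOrientation

theorem SimpleGraph.IsCoherent.exists_orientation {V : Type*} {G : SimpleGraph V}
    {F : Finset (Finset V)} (hF : G.IsCoherent F) :
    ∃ O : GraphOrientation G, ∀ U ∈ F, IsClosedUnder O.dir U := by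
  -- an edge leaving some `U ∈ F` has to be oriented into `U`
  obtain ⟨O, hO⟩ := exists_dir_of (G := G) (fun a b => ∃ U ∈ F, b ∈ U ∧ a ∉ U) <| by
    rintro a b hab ⟨X, hX, hbX, haX⟩ ⟨Y, hY, haY, hbY⟩
    exact (hF Y hY X hX a b hab haY hbX).elim haX hbY
  refine ⟨O, fun U hU a b hab ha => ?_⟩
  by_contra hb
  exact O.not_dir_of_dir hab (hO b a (O.adj_of_dir a b hab).symm ⟨U, hU, ha, hb⟩)

section Counting

variable {V : Type*} [Fintype V] [DecidableEq V] {G : SimpleGraph V} [DecidableRel G.Adj]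

open Classical in
theorem card_isClosedUnder_eq (F : Finset (Finset V)) :
    #{O : GraphOrientation G | ∀ U ∈ F, IsClosedUnder O.dir U} =
      #(G.edgeFinset.powerset.filter fun S : Finset (Sym2 V) =>
        G.IsCoherent F ∧ ∀ U ∈ F, IsClosedUnder (Sym2.ToRel ↑S) U) := by
  by_cases hF : G.IsCoherent F
  · obtain ⟨O₀, hO₀⟩ := hF.exists_orientation
    rw [card_filter_eq_card_filter_flip O₀]
    refine congrArg card (filter_congr fun S hS => ?_)
    have hS : (S : Set (Sym2 V)) ⊆ G.edgeSet := by
      simpa [← coe_subset] using mem_powerset.1 hS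
    simp only [hF, true_and]
    exact forall₂_congr fun U hU => isClosedUnder_flip_iff (hO₀ U hU) hS
  · rw [card_eq_zero.2 (filter_eq_empty_iff.2 fun O _ hO => hF (O.isCoherent hO)),
      card_eq_zero.2 (filter_eq_empty_iff.2 fun S _ hS => hF hS.1)]

open Classical in
theorem card_stronglyConnected_eq_sum_coherentFamilySum :
    (#{O : GraphOrientation G | O.IsStronglyConnected} : ℤ) =
      ∑ S ∈ G.edgeFinset.powerset, coherentFamilySum G (Sym2.ToRel ↑S) := by
  have hcount (F : Finset (Finset V)) (c : ℤ) :
      ∑ O : GraphOrientation G, (if ∀ U ∈ F, IsClosedUnder O.dir U then c else 0) =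
        ∑ S ∈ G.edgeFinset.powerset,
          if G.IsCoherent F ∧ ∀ U ∈ F, IsClosedUnder (Sym2.ToRel ↑S) U then c else 0 := by
    rw [← sum_filter, ← sum_filter, sum_const, sum_const, card_isClosedUnder_eq]
  calc (#{O : GraphOrientation G | O.IsStronglyConnected} : ℤ)
      = ∑ O : GraphOrientation G, ∑ F ∈ (properSubsets V).powerset,
          if ∀ U ∈ F, IsClosedUnder O.dir U then (-1) ^ #F else 0 := by
        simp only [IsStronglyConnected, Reaches, sum_powerset_properSubsets_isClosedUnder,
          sum_boole]
        congr
    _ = ∑ S ∈ G.edgeFinset.powerset, coherentFamilySum G (Sym2.ToRel ↑S) := by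
        rw [sum_comm]
        simp only [hcount, coherentFamilySum]
        exact sum_comm

end Counting

section Components

variable {V : Type*}

theorem Sym2.isTotallyCyclic_toRel (S : Set (Sym2 V)) : IsTotallyCyclic (Sym2.ToRel S) :=
  fun _ _ h => .single ((Sym2.toRel_symm S).symm _ _ h)

theorem Sym2.reflTransGen_toRel (S : Set (Sym2 V)) :
    ReflTransGen (Sym2.ToRel S) = (SimpleGraph.fromEdgeSet S).Reachable := by
  funext u v
  rw [SimpleGraph.reachable_iff_reflTransGen]
  refine propext ⟨ReflTransGen.lift' id (fun a b hab => ?_) _ _,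
    ReflTransGen.mono (fun a b h => ((SimpleGraph.fromEdgeSet_adj S).1 h).1) _ _⟩
  by_cases h : a = b
  · exact h ▸ .refl
  · exact .single ⟨hab, h⟩

theorem numStrongComponents_toRel (S : Set (Sym2 V)) :
    numStrongComponents (Sym2.ToRel S) = numComponents V S := by
  rw [numStrongComponents, (Sym2.isTotallyCyclic_toRel S).mutuallyReachable_eq,
    Sym2.reflTransGen_toRel]
  rfl

theorem cyclicSign_toRel (S : Set (Sym2 V)) :
    cyclicSign (Sym2.ToRel S) = -(-1) ^ numComponents V S := by
  rw [cyclicSign, if_pos (Sym2.isTotallyCyclic_toRel S), numStrongComponents_toRel]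

end Components

theorem statement17 {V : Type*} [Fintype V] [DecidableEq V] (G : SimpleGraph V)
    [DecidableRel G.Adj] (hG : G.Connected) :
    ({O : GraphOrientation G | O.IsStronglyConnected}.ncard : ℤ) =
      ∑ S ∈ G.edgeFinset.powerset,
        ((((-1 : ℤˣ) ^ ((numComponents V (↑S : Set (Sym2 V)) : ℤ) - 1) : ℤˣ)) : ℤ) := by
  classical
  rw [Set.ncard_eq_toFinset_card', Set.toFinset_ofPred,
    card_stronglyConnected_eq_sum_coherentFamilySum]
  refine sum_congr rfl fun S _ => ?_
  rw [coherentFamilySum_eq_cyclicSign hG, cyclicSign_toRel]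
  simp [zpow_sub_one, zpow_natCast]
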